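/- arXiv:2007.10244 — 2 statements merged into one kernel-verified Lean document; each statement's English description precedes it below -/
import Mathlib

section
/- Let 0 < α < 1, let (a,b) be a finite interval, let f ∈ L^1((a,b)) and c ∈ ℝ, and define F(x) := c (x-a)^{α-1} + (I₋^α f)(x). Then F ∈ L^1((a,b)), for every x ∈ (a,b) one has (I₋^{1-α}F)(x) = c Γ(α) + ∫_a^x f(y) dy, and for almost every x ∈ (a,b) the left Riemann–Liouville fractional derivative of F exists at x and satisfies (D₋^α F)(x) = f(x). -/
open MeasureTheory Real Set

/-- The left Riemann–Liouville fractional integral of order `σ` on `(a,b)`: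
`(I₋^σ f)(x) = (1/Γ(σ)) ∫_a^x (x-y)^{σ-1} f(y) dy`. -/
noncomputable def leftRLInt (σ a : ℝ) (f : ℝ → ℝ) (x : ℝ) : ℝ :=
  (1 / Real.Gamma σ) * ∫ y in a..x, (x - y) ^ (σ - 1) * f y

/-!
On the triangle `a < t < y < x`, Fubini and the Beta integral
`∫_t^x (y - t)^(α-1) (x - y)^(β-1) dy = (x - t)^(α+β-1) B(α, β)` give the semigroup law
`I^β (I^α f) = I^(α+β) f`. When `α + β ≥ 1` this inner integral is bounded by
`(x - a)^(α+β-1) B(α, β)`, so the law holds at every point `x`, not only almost everywhere.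
The same Beta integral computes `I^β ((· - a)^(α-1)) = Γ(α)/Γ(α+β) (x - a)^(α+β-1)`.
Taking `β = 1 - α` gives `I^(1-α) F = c Γ(α) + ∫_a^x f`, which is differentiable with
derivative `f` almost everywhere by the Lebesgue differentiation theorem. Taking `β = 1` shows
that `F` is integrable.
-/

open intervalIntegral

section Beta

variable {p q t x : ℝ}

theorem integral_rpow_sub_mul_rpow_sub (hp : 0 < p) (hq : 0 < q) (htx : t < x) :
    ∫ y in t..x, (y - t) ^ (p - 1) * (x - y) ^ (q - 1)
      = (x - t) ^ (p + q - 1) * ProbabilityTheory.beta p q := by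
  have hL : 0 < x - t := sub_pos.2 htx
  have hshift : ∫ y in t..x, (y - t) ^ (p - 1) * (x - y) ^ (q - 1)
      = ∫ u in 0..x - t, u ^ (p - 1) * (x - t - u) ^ (q - 1) := by
    simpa only [sub_sub_sub_cancel_right, sub_self] using
      integral_comp_sub_right (a := t) (b := x) (fun u => u ^ (p - 1) * (x - t - u) ^ (q - 1)) t
  have hcomplex : ((∫ u in 0..x - t, u ^ (p - 1) * (x - t - u) ^ (q - 1) : ℝ) : ℂ)
      = ∫ u in 0..x - t,
          (u : ℂ) ^ ((p : ℂ) - 1) * (((x - t : ℝ) : ℂ) - u) ^ ((q : ℂ) - 1) := by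
    rw [← intervalIntegral.integral_ofReal]
    refine integral_congr fun u hu => ?_
    rw [uIcc_of_le hL.le] at hu
    push_cast [Complex.ofReal_cpow hu.1, Complex.ofReal_cpow (sub_nonneg.2 hu.2)]
    rfl
  rw [hshift, ProbabilityTheory.beta_eq_betaIntegralReal p q hp hq,
    ← Complex.ofReal_re (∫ _ in _.._, _), hcomplex, Complex.betaIntegral_scaled _ _ hL,
    show (p : ℂ) + q - 1 = ((p + q - 1 : ℝ) : ℂ) by push_cast; ring,
    ← Complex.ofReal_cpow hL.le, Complex.re_ofReal_mul]

theorem intervalIntegrable_rpow_sub_mul_rpow_sub (hp : 0 < p) (hq : 0 < q) (htx : t < x) :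
    IntervalIntegrable (fun y => (y - t) ^ (p - 1) * (x - y) ^ (q - 1)) volume t x := by
  refine intervalIntegrable_of_integral_ne_zero ?_
  rw [integral_rpow_sub_mul_rpow_sub hp hq htx]
  exact (mul_pos (rpow_pos_of_pos (sub_pos.2 htx) _) (ProbabilityTheory.beta_pos hp hq)).ne'

end Beta

section Dirichlet

variable {a x : ℝ} {k : ℝ → ℝ → ℝ} {g : ℝ → ℝ}

theorem Ioi_inter_Ioc_of_mem {t : ℝ} (ht : t ∈ Ioc a x) : Ioi t ∩ Ioc a x = Ioc t x := by
  ext y; simp only [mem_inter_iff, mem_Ioi, mem_Ioc] at ht ⊢; grind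

theorem Iio_inter_Ioc_of_mem {y : ℝ} (hy : y ∈ Ioc a x) : Iio y ∩ Ioc a x = Ioo a y := by
  ext t; simp only [mem_inter_iff, mem_Iio, mem_Ioc, mem_Ioo] at hy ⊢; grind

noncomputable def triangleKernel (k : ℝ → ℝ → ℝ) (g : ℝ → ℝ) : ℝ × ℝ → ℝ :=
  {p : ℝ × ℝ | p.1 < p.2}.indicator fun p => k p.1 p.2 * g p.1

theorem setIntegral_triangleKernel_left {t : ℝ} (ht : t ∈ Ioc a x) :
    ∫ y in Ioc a x, triangleKernel k g (t, y) = ∫ y in t..x, k t y * g t := by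
  change ∫ y in Ioc a x, (Ioi t).indicator (fun y => k t y * g t) y = _
  rw [MeasureTheory.integral_indicator measurableSet_Ioi,
    Measure.restrict_restrict measurableSet_Ioi, Ioi_inter_Ioc_of_mem ht, integral_of_le ht.2]

theorem setIntegral_triangleKernel_right {y : ℝ} (hy : y ∈ Ioc a x) :
    ∫ t in Ioc a x, triangleKernel k g (t, y) = ∫ t in a..y, k t y * g t := by
  change ∫ t in Ioc a x, (Iio y).indicator (fun t => k t y * g t) t = _
  rw [MeasureTheory.integral_indicator measurableSet_Iio,
    Measure.restrict_restrict measurableSet_Iio, Iio_inter_Ioc_of_mem hy, integral_of_le hy.1.le,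
    integral_Ioc_eq_integral_Ioo]

theorem integrable_triangleKernel {C : ℝ} (hk : Measurable fun p : ℝ × ℝ => k p.1 p.2)
    (hk_nonneg : ∀ t ∈ Ioc a x, ∀ y ∈ Ioc t x, 0 ≤ k t y)
    (hk_int : ∀ t ∈ Ioc a x, IntervalIntegrable (k t) volume t x)
    (hk_le : ∀ t ∈ Ioc a x, ∫ y in t..x, k t y ≤ C) (hg : IntervalIntegrable g volume a x) :
    Integrable (triangleKernel k g)
      ((volume.restrict (Ioc a x)).prod (volume.restrict (Ioc a x))) := by
  have hmeas : AEStronglyMeasurable (triangleKernel k g)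
      ((volume.restrict (Ioc a x)).prod (volume.restrict (Ioc a x))) :=
    (hk.aestronglyMeasurable.mul hg.1.aestronglyMeasurable.comp_fst).indicator
      (measurableSet_lt measurable_fst measurable_snd)
  refine (integrable_prod_iff hmeas).2 ⟨?_, ?_⟩
  · refine (ae_restrict_iff' measurableSet_Ioc).2 (.of_forall fun t ht => ?_)
    change Integrable ((Ioi t).indicator fun y => k t y * g t) _
    rw [integrable_indicator_iff measurableSet_Ioi, IntegrableOn,
      Measure.restrict_restrict measurableSet_Ioi, Ioi_inter_Ioc_of_mem ht]
    exact (hk_int t ht).1.mul_const (g t)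
  · refine Integrable.mono' (hg.1.norm.const_mul C) hmeas.norm.integral_prod_right' ?_
    refine (ae_restrict_iff' measurableSet_Ioc).2 (.of_forall fun t ht => ?_)
    have hnorm : ∫ y in Ioc a x, ‖triangleKernel k g (t, y)‖
        = ∫ y in Ioc a x, triangleKernel k (‖g ·‖) (t, y) := by
      refine setIntegral_congr_fun measurableSet_Ioc fun y hy => ?_
      by_cases hty : t < y
      · simp [triangleKernel, hty, norm_mul, abs_of_nonneg (hk_nonneg t ht y ⟨hty, hy.2⟩)]
      · simp [triangleKernel, hty]
    rw [Real.norm_of_nonneg (integral_nonneg fun _ => norm_nonneg _), hnorm,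
      setIntegral_triangleKernel_left ht, intervalIntegral.integral_mul_const]
    exact mul_le_mul_of_nonneg_right (hk_le t ht) (norm_nonneg _)

theorem intervalIntegrable_integral_triangleKernel (hax : a ≤ x)
    (hG : Integrable (triangleKernel k g)
      ((volume.restrict (Ioc a x)).prod (volume.restrict (Ioc a x)))) :
    IntervalIntegrable (fun y => ∫ t in a..y, k t y * g t) volume a x :=
  (intervalIntegrable_iff_integrableOn_Ioc_of_le hax).2 <| hG.integral_prod_right.congr <|
    (ae_restrict_iff' measurableSet_Ioc).2
      (.of_forall fun _ hy => setIntegral_triangleKernel_right hy)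

theorem integral_integral_triangleKernel_swap (hax : a ≤ x)
    (hG : Integrable (triangleKernel k g)
      ((volume.restrict (Ioc a x)).prod (volume.restrict (Ioc a x)))) :
    ∫ y in a..x, ∫ t in a..y, k t y * g t = ∫ t in a..x, (∫ y in t..x, k t y) * g t := by
  simp only [integral_of_le hax]
  calc ∫ y in Ioc a x, ∫ t in a..y, k t y * g t
      = ∫ y in Ioc a x, ∫ t in Ioc a x, triangleKernel k g (t, y) :=
        setIntegral_congr_fun measurableSet_Ioc fun y hy =>
          (setIntegral_triangleKernel_right hy).symm
    _ = ∫ t in Ioc a x, ∫ y in Ioc a x, triangleKernel k g (t, y) :=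
        (integral_integral_swap (f := fun t y => triangleKernel k g (t, y)) hG).symm
    _ = ∫ t in Ioc a x, (∫ y in t..x, k t y) * g t :=
        setIntegral_congr_fun measurableSet_Ioc fun t ht => by
          rw [setIntegral_triangleKernel_left ht, intervalIntegral.integral_mul_const]

end Dirichlet

section RiemannLiouville

variable {α β a x : ℝ} {f g : ℝ → ℝ}

theorem intervalIntegrable_sub_rpow {r : ℝ} (hr : -1 < r) (a x : ℝ) :
    IntervalIntegrable (fun y => (y - a) ^ r) volume a x := by
  simpa using (intervalIntegrable_rpow' hr (a := 0) (b := x - a)).comp_sub_right a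

theorem leftRLInt_const_mul (c : ℝ) :
    leftRLInt β a (fun y => c * g y) x = c * leftRLInt β a g x := by
  simp only [leftRLInt, mul_left_comm _ c, intervalIntegral.integral_const_mul]

theorem leftRLInt_add (hf : IntervalIntegrable (fun y => (x - y) ^ (β - 1) * f y) volume a x)
    (hg : IntervalIntegrable (fun y => (x - y) ^ (β - 1) * g y) volume a x) :
    leftRLInt β a (f + g) x = leftRLInt β a f x + leftRLInt β a g x := by
  simp only [leftRLInt, Pi.add_apply, mul_add, integral_add hf hg]

theorem leftRLInt_one : leftRLInt 1 a f x = ∫ t in a..x, f t := by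
  simp [leftRLInt]

theorem leftRLInt_sub_rpow (hα : 0 < α) (hβ : 0 < β) (hax : a < x) :
    leftRLInt β a (fun y => (y - a) ^ (α - 1)) x
      = Gamma α / Gamma (α + β) * (x - a) ^ (α + β - 1) := by
  rw [leftRLInt, integral_congr (g := fun y => (y - a) ^ (α - 1) * (x - y) ^ (β - 1))
    fun y _ => mul_comm _ _, integral_rpow_sub_mul_rpow_sub hα hβ hax, ProbabilityTheory.beta]
  have := (Gamma_pos_of_pos hβ).ne'
  field_simp

theorem intervalIntegrable_rpow_mul_sub_rpow (hα : 0 < α) (hβ : 0 < β) (hax : a < x) :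
    IntervalIntegrable (fun y => (x - y) ^ (β - 1) * (y - a) ^ (α - 1)) volume a x := by
  simpa only [mul_comm] using intervalIntegrable_rpow_sub_mul_rpow_sub hα hβ hax

theorem rpow_mul_leftRLInt (y : ℝ) :
    (x - y) ^ (β - 1) * leftRLInt α a f y
      = 1 / Gamma α * ∫ t in a..y, (y - t) ^ (α - 1) * (x - y) ^ (β - 1) * f t := by
  rw [leftRLInt, mul_left_comm, ← intervalIntegral.integral_const_mul]
  congr 2 with t
  ring

theorem integrable_triangleKernel_rpow (hα : 0 < α) (hβ : 0 < β) (hαβ : 1 ≤ α + β)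
    (hf : IntervalIntegrable f volume a x) :
    Integrable (triangleKernel (fun t y => (y - t) ^ (α - 1) * (x - y) ^ (β - 1)) f)
      ((volume.restrict (Ioc a x)).prod (volume.restrict (Ioc a x))) := by
  refine integrable_triangleKernel (C := (x - a) ^ (α + β - 1) * ProbabilityTheory.beta α β)
    (by fun_prop) ?_ ?_ ?_ hf
  · intro t _ y hy
    exact mul_nonneg (rpow_nonneg (sub_nonneg.2 hy.1.le) _) (rpow_nonneg (sub_nonneg.2 hy.2) _)
  · intro t ht
    rcases ht.2.eq_or_lt with rfl | htx
    · exact IntervalIntegrable.refl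
    · exact intervalIntegrable_rpow_sub_mul_rpow_sub hα hβ htx
  · intro t ht
    have hB := (ProbabilityTheory.beta_pos hα hβ).le
    rcases ht.2.eq_or_lt with rfl | htx
    · rw [integral_same]
      exact mul_nonneg (rpow_nonneg (sub_nonneg.2 ht.1.le) _) hB
    · rw [integral_rpow_sub_mul_rpow_sub hα hβ htx]
      gcongr
      exact ht.1.le

theorem intervalIntegrable_rpow_mul_leftRLInt (hα : 0 < α) (hβ : 0 < β) (hαβ : 1 ≤ α + β)
    (hax : a ≤ x) (hf : IntervalIntegrable f volume a x) :
    IntervalIntegrable (fun y => (x - y) ^ (β - 1) * leftRLInt α a f y) volume a x := by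
  simp_rw [rpow_mul_leftRLInt]
  exact (intervalIntegrable_integral_triangleKernel hax
    (integrable_triangleKernel_rpow hα hβ hαβ hf)).const_mul _

theorem leftRLInt_leftRLInt (hα : 0 < α) (hβ : 0 < β) (hαβ : 1 ≤ α + β) (hax : a < x)
    (hf : IntervalIntegrable f volume a x) :
    leftRLInt β a (leftRLInt α a f) x = leftRLInt (α + β) a f x := by
  have hswap := integral_integral_triangleKernel_swap hax.le
    (integrable_triangleKernel_rpow hα hβ hαβ hf)
  have hinner : ∫ t in a..x, (∫ y in t..x, (y - t) ^ (α - 1) * (x - y) ^ (β - 1)) * f t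
      = ProbabilityTheory.beta α β * ∫ t in a..x, (x - t) ^ (α + β - 1) * f t := by
    rw [← intervalIntegral.integral_const_mul]
    refine integral_congr_ae ?_
    filter_upwards [volume.ae_ne x] with t htx ht
    rw [uIoc_of_le hax.le] at ht
    rw [integral_rpow_sub_mul_rpow_sub hα hβ (lt_of_le_of_ne ht.2 htx)]
    ring
  have := (Gamma_pos_of_pos hα).ne'
  have := (Gamma_pos_of_pos hβ).ne'
  have := (Gamma_pos_of_pos (add_pos hα hβ)).ne'
  rw [leftRLInt]
  simp_rw [rpow_mul_leftRLInt]
  rw [intervalIntegral.integral_const_mul, hswap, hinner, leftRLInt, ProbabilityTheory.beta]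
  field_simp

end RiemannLiouville

theorem stmt5 (α a b c : ℝ) (hα : 0 < α) (hα1 : α < 1) (hab : a < b)
    (f : ℝ → ℝ) (hf : IntegrableOn f (Set.Ioo a b))
    (F : ℝ → ℝ) (hFdef : ∀ x, F x = c * (x - a) ^ (α - 1) + leftRLInt α a f x) :
    IntegrableOn F (Set.Ioo a b) ∧
    (∀ x ∈ Set.Ioo a b,
      leftRLInt (1 - α) a F x = c * Real.Gamma α + ∫ y in a..x, f y) ∧
    (∀ᵐ x ∂(volume.restrict (Set.Ioo a b)),
      HasDerivAt (fun t => leftRLInt (1 - α) a F t) (f x) x) := by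
  have hβ : 0 < 1 - α := sub_pos.2 hα1
  have hf' : IntervalIntegrable f volume a b :=
    (intervalIntegrable_iff_integrableOn_Ioo_of_le hab.le).2 hf
  have hF : F = (fun y => c * (y - a) ^ (α - 1)) + leftRLInt α a f := funext hFdef
  have hprim : ∀ x ∈ Ioo a b, leftRLInt (1 - α) a F x = c * Gamma α + ∫ y in a..x, f y := by
    intro x hx
    have hfx : IntervalIntegrable f volume a x :=
      hf'.mono_set (uIcc_subset_uIcc left_mem_uIcc (mem_uIcc_of_le hx.1.le hx.2.le))
    rw [hF, leftRLInt_add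
      (by simpa only [mul_left_comm c] using
        (intervalIntegrable_rpow_mul_sub_rpow hα hβ hx.1).const_mul c)
      (intervalIntegrable_rpow_mul_leftRLInt hα hβ (by linarith) hx.1.le hfx),
      leftRLInt_const_mul, leftRLInt_sub_rpow hα hβ hx.1,
      leftRLInt_leftRLInt hα hβ (by linarith) hx.1 hfx, add_sub_cancel, leftRLInt_one]
    simp
  refine ⟨?_, hprim, ?_⟩
  · have hpow : IntervalIntegrable (fun y => c * (y - a) ^ (α - 1)) volume a b :=
      (intervalIntegrable_sub_rpow (by linarith) a b).const_mul c
    have hRL : IntervalIntegrable (leftRLInt α a f) volume a b := by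
      simpa using intervalIntegrable_rpow_mul_leftRLInt hα one_pos (by linarith) hab.le hf'
    rw [hF]
    exact (hpow.add hRL).1.mono_set Ioo_subset_Ioc_self
  · filter_upwards [ae_restrict_mem measurableSet_Ioo,
      ae_restrict_of_ae hf'.ae_hasDerivAt_integral] with x hx hderiv
    have hx' : x ∈ uIcc a b := by rw [uIcc_of_le hab.le]; exact Ioo_subset_Icc_self hx
    exact ((hderiv hx' a left_mem_uIcc).const_add _).congr_of_eventuallyEq
      (Filter.eventually_of_mem (Ioo_mem_nhds hx.1 hx.2) hprim)
end

section
/- Let 0 < α < 1 and let f, F ∈ L^1(ℝ). If F(x) = (1/Γ(α)) ∫_{-∞}^x (x-y)^{α-1} f(y) dy for almost every x ∈ ℝ, then for almost every x ∈ ℝ the left Liouville fractional derivative of F exists at x and equals f(x), i.e., (d/dx)[(1/Γ(1-α)) ∫_{-∞}^x (x-y)^{-α} F(y) dy] = f(x) for almost every x. -/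
/-!
The key identity is the semigroup law `I₋^b (I₋^a f) = I₋^(a+b) f`: after swapping the two
integrations over the triangle `z ≤ y ≤ x`, the inner integral is the Beta integral
`∫_z^x (x-y)^(b-1) (y-z)^(a-1) dy = Γ(a) Γ(b) / Γ(a+b) · (x-z)^(a+b-1)`.
For `a = α`, `b = 1 - α` it turns `I₋^(1-α) F` (which only sees `F` up to a null set) into the
primitive `∫_{-∞}^x f`, and the Lebesgue differentiation theorem differentiates that primitive
almost everywhere.
-/

open MeasureTheory Real Set

/-- The left Liouville fractional integral of order `σ` on `ℝ`:
`(I₋^σ f)(x) = (1/Γ(σ)) ∫_{-∞}^x (x-y)^{σ-1} f(y) dy`. -/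
noncomputable def leftLiouvilleInt (σ : ℝ) (f : ℝ → ℝ) (x : ℝ) : ℝ :=
  (1 / Real.Gamma σ) * ∫ y in Set.Iic x, (x - y) ^ (σ - 1) * f y

theorem integral_rpow_mul_sub_rpow {a b c : ℝ} (ha : 0 < a) (hb : 0 < b) (hc : 0 < c) :
    ∫ t in 0..c, t ^ (a - 1) * (c - t) ^ (b - 1)
      = c ^ (a + b - 1) * (Gamma a * Gamma b / Gamma (a + b)) := by
  have hβ := Complex.betaIntegral_scaled a b hc
  rw [Complex.betaIntegral_eq_Gamma_mul_div _ _ (by simpa) (by simpa)] at hβ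
  apply Complex.ofReal_injective
  rw [← intervalIntegral.integral_ofReal]
  calc ∫ t in 0..c, ((t ^ (a - 1) * (c - t) ^ (b - 1) : ℝ) : ℂ)
      = ∫ t in 0..c, (t : ℂ) ^ ((a : ℂ) - 1) * ((c : ℂ) - t) ^ ((b : ℂ) - 1) := by
        refine intervalIntegral.integral_congr fun t ht => ?_
        rw [uIcc_of_le hc.le] at ht
        have hct : 0 ≤ c - t := sub_nonneg.2 ht.2
        push_cast [Complex.ofReal_cpow ht.1, Complex.ofReal_cpow hct]
        rfl
    _ = _ := by
        rw [hβ]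
        push_cast [Complex.ofReal_cpow hc.le, ← Complex.Gamma_ofReal]
        rfl

theorem integral_sub_rpow_mul_sub_rpow {a b z x : ℝ} (ha : 0 < a) (hb : 0 < b) (hzx : z < x) :
    ∫ y in z..x, (x - y) ^ (b - 1) * (y - z) ^ (a - 1)
      = Gamma a * Gamma b / Gamma (a + b) * (x - z) ^ (a + b - 1) := by
  have hshift := intervalIntegral.integral_comp_sub_right (a := z) (b := x)
    (fun t => t ^ (a - 1) * (x - z - t) ^ (b - 1)) z
  simp only [sub_sub_sub_cancel_right, sub_self] at hshift
  simp_rw [mul_comm ((x - _) ^ (b - 1))]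
  rw [hshift, integral_rpow_mul_sub_rpow ha hb (sub_pos.2 hzx), mul_comm]

/-- The interval integral of a non-integrable function is `0`, so a positive value forces
integrability. -/
theorem intervalIntegrable_sub_rpow_mul_sub_rpow {a b z x : ℝ} (ha : 0 < a) (hb : 0 < b)
    (hzx : z < x) :
    IntervalIntegrable (fun y => (x - y) ^ (b - 1) * (y - z) ^ (a - 1)) volume z x :=
  intervalIntegral.intervalIntegrable_of_integral_ne_zero <| by
    rw [integral_sub_rpow_mul_sub_rpow ha hb hzx]
    have := sub_pos.2 hzx
    positivity

theorem leftLiouvilleInt_congr_ae {σ : ℝ} {f g : ℝ → ℝ} (h : f =ᵐ[volume] g) :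
    leftLiouvilleInt σ f = leftLiouvilleInt σ g := by
  funext x
  unfold leftLiouvilleInt
  congr 1
  refine integral_congr_ae (ae_restrict_of_ae ?_)
  filter_upwards [h] with y hy
  rw [hy]

theorem leftLiouvilleInt_one (f : ℝ → ℝ) (x : ℝ) :
    leftLiouvilleInt 1 f x = ∫ y in Iic x, f y := by
  simp [leftLiouvilleInt]

theorem integral_Iic_eq_Gamma_mul_leftLiouvilleInt {σ : ℝ} (hσ : 0 < σ) (f : ℝ → ℝ) (x : ℝ) :
    ∫ y in Iic x, (x - y) ^ (σ - 1) * f y = Gamma σ * leftLiouvilleInt σ f x := by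
  rw [leftLiouvilleInt, ← mul_assoc, mul_one_div_cancel (Gamma_pos_of_pos hσ).ne', one_mul]

/-- The integrand of `I₋^b (I₋^a f) (x)` at `p = (y, z)`, extended by zero off the triangle
`z ≤ y ≤ x`. -/
noncomputable def iteratedLiouvilleIntegrand (a b x : ℝ) (f : ℝ → ℝ) (p : ℝ × ℝ) : ℝ :=
  {p : ℝ × ℝ | p.2 ≤ p.1 ∧ p.1 ≤ x}.indicator
    (fun p => (x - p.1) ^ (b - 1) * ((p.1 - p.2) ^ (a - 1) * f p.2)) p

section IteratedLiouvilleIntegrand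

variable {a b x : ℝ} {f : ℝ → ℝ}

theorem iteratedLiouvilleIntegrand_eq_indicator_Iic (y z : ℝ) :
    iteratedLiouvilleIntegrand a b x f (y, z) = (Iic x).indicator (fun y =>
      (Iic y).indicator (fun z => (x - y) ^ (b - 1) * ((y - z) ^ (a - 1) * f z)) z) y := by
  simp only [iteratedLiouvilleIntegrand, indicator_apply, mem_ofPred_eq, mem_Iic]
  split_ifs <;> tauto

theorem iteratedLiouvilleIntegrand_eq_indicator_Icc (y z : ℝ) :
    iteratedLiouvilleIntegrand a b x f (y, z) = (Icc z x).indicator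
      (fun y => (x - y) ^ (b - 1) * (y - z) ^ (a - 1) * f z) y := by
  simp only [iteratedLiouvilleIntegrand, indicator_apply, mem_ofPred_eq, mem_Icc, mul_assoc]

theorem norm_iteratedLiouvilleIntegrand (p : ℝ × ℝ) :
    ‖iteratedLiouvilleIntegrand a b x f p‖ = iteratedLiouvilleIntegrand a b x (|f ·|) p := by
  simp only [iteratedLiouvilleIntegrand, indicator_apply, mem_ofPred_eq]
  split_ifs with hp
  · rw [norm_mul, norm_mul, Real.norm_eq_abs, Real.norm_eq_abs, Real.norm_eq_abs,
      abs_of_nonneg (rpow_nonneg (sub_nonneg.2 hp.2) _),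
      abs_of_nonneg (rpow_nonneg (sub_nonneg.2 hp.1) _)]
  · exact norm_zero

theorem aestronglyMeasurable_iteratedLiouvilleIntegrand (hfm : AEStronglyMeasurable f) :
    AEStronglyMeasurable (iteratedLiouvilleIntegrand a b x f) (volume.prod volume) := by
  refine AEStronglyMeasurable.indicator ?_ ?_
  · exact (by fun_prop : Measurable fun p : ℝ × ℝ => (x - p.1) ^ (b - 1)).aestronglyMeasurable.mul
      ((by fun_prop : Measurable fun p : ℝ × ℝ => (p.1 - p.2) ^ (a - 1)).aestronglyMeasurable.mul
        hfm.comp_snd)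
  · exact (measurableSet_le measurable_snd measurable_fst).inter
      (measurableSet_le measurable_fst measurable_const)

theorem integral_iteratedLiouvilleIntegrand_snd (y : ℝ) :
    ∫ z, iteratedLiouvilleIntegrand a b x f (y, z) = (Iic x).indicator
      (fun y => (x - y) ^ (b - 1) * ∫ z in Iic y, (y - z) ^ (a - 1) * f z) y := by
  simp only [iteratedLiouvilleIntegrand_eq_indicator_Iic]
  by_cases hy : y ∈ Iic x
  · simp only [indicator_of_mem hy]
    rw [integral_indicator measurableSet_Iic, integral_const_mul]
  · simp only [indicator_of_notMem hy, integral_zero]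

theorem integrable_iteratedLiouvilleIntegrand_fst (ha : 0 < a) (hb : 0 < b) (z : ℝ) :
    Integrable fun y => iteratedLiouvilleIntegrand a b x f (y, z) := by
  simp only [iteratedLiouvilleIntegrand_eq_indicator_Icc]
  refine (integrable_indicator_iff measurableSet_Icc).2 ?_
  by_cases hzx : z < x
  · exact ((intervalIntegrable_iff_integrableOn_Icc_of_le hzx.le).1
      (intervalIntegrable_sub_rpow_mul_sub_rpow ha hb hzx)).mul_const _
  · exact IntegrableOn.of_measure_zero (by simpa using not_lt.1 hzx)

theorem integral_iteratedLiouvilleIntegrand_fst (ha : 0 < a) (hb : 0 < b) (z : ℝ) :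
    ∫ y, iteratedLiouvilleIntegrand a b x f (y, z) = (Iio x).indicator
      (fun z => Gamma a * Gamma b / Gamma (a + b) * ((x - z) ^ (a + b - 1) * f z)) z := by
  simp only [iteratedLiouvilleIntegrand_eq_indicator_Icc]
  rw [integral_indicator measurableSet_Icc, integral_mul_const]
  by_cases hzx : z < x
  · rw [integral_Icc_eq_integral_Ioc, ← intervalIntegral.integral_of_le hzx.le,
      integral_sub_rpow_mul_sub_rpow ha hb hzx, indicator_of_mem (mem_Iio.2 hzx), mul_assoc]
  · rw [setIntegral_measure_zero _ (by simpa using not_lt.1 hzx), zero_mul,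
      indicator_of_notMem (mt mem_Iio.1 hzx)]

theorem integrable_iteratedLiouvilleIntegrand (ha : 0 < a) (hb : 0 < b)
    (hfm : AEStronglyMeasurable f)
    (hf : IntegrableOn (fun z => (x - z) ^ (a + b - 1) * f z) (Iic x)) :
    Integrable (iteratedLiouvilleIntegrand a b x f) (volume.prod volume) := by
  rw [integrable_prod_iff' (aestronglyMeasurable_iteratedLiouvilleIntegrand hfm)]
  refine ⟨.of_forall (integrable_iteratedLiouvilleIntegrand_fst ha hb), ?_⟩
  simp only [norm_iteratedLiouvilleIntegrand, integral_iteratedLiouvilleIntegrand_fst ha hb]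
  refine (integrable_indicator_iff measurableSet_Iio).2 (Integrable.const_mul ?_ _)
  refine IntegrableOn.congr_fun (hf.mono_set Iio_subset_Iic_self).norm (fun z hz => ?_)
    measurableSet_Iio
  rw [norm_mul, Real.norm_eq_abs, Real.norm_eq_abs,
    abs_of_nonneg (rpow_nonneg (sub_nonneg.2 (le_of_lt hz)) _)]

theorem leftLiouvilleInt_leftLiouvilleInt (ha : 0 < a) (hb : 0 < b)
    (hfm : AEStronglyMeasurable f)
    (hf : IntegrableOn (fun z => (x - z) ^ (a + b - 1) * f z) (Iic x)) :
    leftLiouvilleInt b (leftLiouvilleInt a f) x = leftLiouvilleInt (a + b) f x := by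
  have hswap : Gamma a * (Gamma b * leftLiouvilleInt b (leftLiouvilleInt a f) x)
      = Gamma a * Gamma b / Gamma (a + b) * (Gamma (a + b) * leftLiouvilleInt (a + b) f x) := by
    simpa only [integral_iteratedLiouvilleIntegrand_snd,
      integral_iteratedLiouvilleIntegrand_fst ha hb, integral_indicator measurableSet_Iic,
      integral_indicator measurableSet_Iio, setIntegral_congr_set Iio_ae_eq_Iic,
      integral_Iic_eq_Gamma_mul_leftLiouvilleInt ha, mul_left_comm _ (Gamma a), integral_const_mul,
      integral_Iic_eq_Gamma_mul_leftLiouvilleInt hb,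
      integral_Iic_eq_Gamma_mul_leftLiouvilleInt (add_pos ha hb)]
      using integral_integral_swap (f := fun y z => iteratedLiouvilleIntegrand a b x f (y, z))
        (integrable_iteratedLiouvilleIntegrand ha hb hfm hf)
  have hΓ : Gamma a * Gamma b ≠ 0 := (mul_pos (Gamma_pos_of_pos ha) (Gamma_pos_of_pos hb)).ne'
  have hΓab : Gamma (a + b) ≠ 0 := (Gamma_pos_of_pos (add_pos ha hb)).ne'
  refine mul_left_cancel₀ hΓ ?_
  rw [mul_assoc, hswap]
  field_simp

end IteratedLiouvilleIntegrand

theorem MeasureTheory.Integrable.ae_hasDerivAt_integral_Iic {E : Type*} [NormedAddCommGroup E]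
    [NormedSpace ℝ E] [CompleteSpace E] {f : ℝ → E} (hf : Integrable f) :
    ∀ᵐ x, HasDerivAt (fun t => ∫ y in Iic t, f y) (f x) x := by
  filter_upwards [LocallyIntegrable.ae_hasDerivAt_integral hf.locallyIntegrable] with x hx
  have hprim : (fun t => ∫ y in Iic t, f y) = fun t => (∫ y in Iic 0, f y) + ∫ y in 0..t, f y :=
    funext fun t => by
      rw [← intervalIntegral.integral_Iic_sub_Iic hf.integrableOn hf.integrableOn,
        add_sub_cancel]
  rw [hprim]
  exact (hx 0).const_add _

theorem stmt6_general (α : ℝ) (hα : 0 < α) (hα1 : α < 1)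
    (f F : ℝ → ℝ) (hf : Integrable f (volume : Measure ℝ))
    (h : ∀ᵐ x : ℝ, F x = leftLiouvilleInt α f x) :
    ∀ᵐ x : ℝ, HasDerivAt (fun t => leftLiouvilleInt (1 - α) F t) (f x) x := by
  have hprim : leftLiouvilleInt (1 - α) F = fun t => ∫ y in Iic t, f y := by
    funext t
    have hft : IntegrableOn (fun z => (t - z) ^ (α + (1 - α) - 1) * f z) (Iic t) := by
      simpa using hf.integrableOn
    rw [leftLiouvilleInt_congr_ae h, leftLiouvilleInt_leftLiouvilleInt hα (sub_pos.2 hα1) hf.1 hft,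
      add_sub_cancel, leftLiouvilleInt_one]
  rw [hprim]
  exact hf.ae_hasDerivAt_integral_Iic

theorem stmt6 (α : ℝ) (hα : 0 < α) (hα1 : α < 1)
    (f F : ℝ → ℝ) (hf : Integrable f (volume : Measure ℝ))
    (hF : Integrable F (volume : Measure ℝ))
    (h : ∀ᵐ x : ℝ, F x = leftLiouvilleInt α f x) :
    ∀ᵐ x : ℝ, HasDerivAt (fun t => leftLiouvilleInt (1 - α) F t) (f x) x :=
  stmt6_general α hα hα1 f F hf h
end
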